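/- Let m be a prime and n = m^k for some integer k > 1. Then there exists a prime p with m < p < 2m such that m does not divide n − p; hence the decomposition n = p + (n − p) has the property: for every pair (m₀, m₁) with 0 ≤ m₀ ≤ p, 0 ≤ m₁ ≤ n − p, each mᵢ either 0 or satisfying gcd(mᵢ, nᵢ) > 1 (where n₀ = p, n₁ = n − p), we have m₀ + m₁ ≠ m. -/
import Mathlib


/-- If `m` is prime and `n = m ^ k` with `k > 1`, then there is a
prime `p` with `m < p < 2m` and `m ∤ n - p`, and the decomposition
`n = p + (n - p)` blocks every admissible pair `(m₀, m₁)` from summing to `m`. -/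
theorem stmt_7 (m k n : ℕ) (hm : m.Prime) (hk : 1 < k) (hn : n = m ^ k) :
    ∃ p : ℕ, p.Prime ∧ m < p ∧ p < 2 * m ∧ ¬ m ∣ (n - p) ∧
      ∀ m₀ m₁ : ℕ, m₀ ≤ p → m₁ ≤ n - p →
        (m₀ = 0 ∨ 1 < Nat.gcd m₀ p) → (m₁ = 0 ∨ 1 < Nat.gcd m₁ (n - p)) →
        m₀ + m₁ ≠ m := by
  have hm2 : 2 ≤ m := hm.two_le
  obtain ⟨p, hp, hmp, hp2m⟩ := Nat.bertrand m (by omega)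
  have hplt : p < 2 * m := by
    rcases lt_or_eq_of_le hp2m with h | h
    · exact h
    · exfalso
      have : ¬ (2 * m).Prime := Nat.not_prime_mul (by omega) (by omega)
      exact this (h ▸ hp)
  have hmnotp : ¬ m ∣ p := by
    intro h
    have := (Nat.prime_dvd_prime_iff_eq hm hp).mp h
    omega
  have hmn : m ∣ n := hn ▸ dvd_pow_self m (by omega)
  have hpn : p ≤ n := by
    have : m * m ≤ m ^ k := by
      calc m * m = m ^ 2 := (sq m).symm
      _ ≤ m ^ k := Nat.pow_le_pow_right (by omega) hk
    nlinarith [hn]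
  have hnd : ¬ m ∣ (n - p) := by
    intro h
    have : m ∣ p := by
      have := Nat.dvd_sub hmn h
      rwa [Nat.sub_sub_self hpn] at this
    exact hmnotp this
  refine ⟨p, hp, hmp, hplt, hnd, ?_⟩
  intro m₀ m₁ h₀ h₁ hg₀ hg₁ hsum
  rcases Nat.eq_zero_or_pos m₀ with hz | hpos
  · -- m₀ = 0, so m₁ = m
    subst hz
    have hm₁ : m₁ = m := by omega
    rcases hg₁ with h | hg₁
    · omega
    · rw [hm₁] at hg₁
      have hd : Nat.gcd m (n - p) ∣ m := Nat.gcd_dvd_left _ _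
      have : Nat.gcd m (n - p) = m := ((Nat.dvd_prime hm).mp hd).resolve_left (by omega)
      exact hnd (this ▸ Nat.gcd_dvd_right m (n - p))
  · rcases hg₀ with h | hg₀
    · omega
    · have hd : Nat.gcd m₀ p ∣ p := Nat.gcd_dvd_right _ _
      have : Nat.gcd m₀ p = p := ((Nat.dvd_prime hp).mp hd).resolve_left (by omega)
      have hpd : p ∣ m₀ := this ▸ Nat.gcd_dvd_left m₀ p
      have : p ≤ m₀ := Nat.le_of_dvd hpos hpd
      omega
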